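/- For every pillowcase code σ there exists a nice closed curve γ in the punctured sphere ℙ whose pillowcase code σ(γ) is equivalent to σ (equal up to a cyclic shift of indices). -/

import Mathlib

open Real ContinuousMap

noncomputable section

abbrev E3 := EuclideanSpace ℝ (Fin 3)

def sphere2 : Set E3 := Metric.sphere 0 1

def eqPt (θ : ℝ) : E3 := (WithLp.equiv 2 _).symm ![Real.cos θ, Real.sin θ, 0]

lemma eqPt_mem_sphere2 (θ : ℝ) : eqPt θ ∈ sphere2 := by
  simp only [sphere2, mem_sphere_iff_norm, sub_zero, eqPt]
  rw [EuclideanSpace.norm_eq]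
  simp [Fin.sum_univ_three]

def puncture (k : ℕ) (j : Fin k) : E3 := eqPt (2 * π * j / k)

def Pset (k : ℕ) : Set E3 := sphere2 \ Set.range (puncture k)

abbrev PSub (k : ℕ) := ↥(Pset k)

def equatorSet (k : ℕ) : Set E3 := {x ∈ Pset k | x 2 = 0}

def arcSide (k : ℕ) (j : Fin k) : Set E3 :=
  {x | ∃ θ : ℝ, 2 * π * j / k < θ ∧ θ < 2 * π * (j + 1) / k ∧ x = eqPt θ}

def hemi : Bool → Set E3
  | true => {x | 0 < x 2}
  | false => {x | x 2 < 0}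

structure IsNice (k : ℕ) (γ : C(Circle, PSub k)) (m : ℕ) (t : ℕ → ℝ) (σ : ℕ → Fin k) : Prop where
  m_pos : 1 ≤ m
  mono : StrictMono t
  t_periodic : ∀ i, t (i + 2 * m) = t i + 2 * π
  σ_periodic : ∀ i, σ (i + 2 * m) = σ i
  preimage : ∀ z : Circle, ((γ z : E3) ∈ equatorSet k) ↔ ∃ i, z = Circle.exp (t i)
  code : ∀ i, ((γ (Circle.exp (t i)) : PSub k) : E3) ∈ arcSide k (σ i)
  adjacent : ∀ i, σ i ≠ σ (i + 1)
  alternate : ∃ b : Bool, ∀ i s, t i < s → s < t (i + 1) →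
      ((γ (Circle.exp s) : PSub k) : E3) ∈ hemi (if Even i then b else !b)

def IsNullCurve {k : ℕ} (γ : C(Circle, PSub k)) : Prop :=
  ∃ x, γ.Homotopic (ContinuousMap.const Circle x)

def NullLoop {X : Type*} [TopologicalSpace X] {x : X} (p : Path x x) : Prop :=
  p.Homotopic (Path.refl x)

def arcPath {X : Type*} [TopologicalSpace X] (δ : C(Circle, X)) (a b : ℝ) :
    Path (δ (Circle.exp a)) (δ (Circle.exp b)) where
  toFun u := δ (Circle.exp (a + u * (b - a)))
  continuous_toFun := by fun_prop
  source' := by simp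
  target' := by
    have h : a + (1 : ℝ) * (b - a) = b := by ring
    simp [h]

def AdmissibleWith (k m : ℕ) (t : ℕ → ℝ) (σ : ℕ → Fin k)
    (γ δ : C(Circle, PSub k)) (s s' : ℕ → ℝ) : Prop :=
  (∀ i, s i ≤ s' i) ∧
  (∀ i, s' i < s (i + 1)) ∧
  (∀ i, s (i + 2 * m) = s i + 2 * π) ∧
  (∀ i, s' (i + 2 * m) = s' i + 2 * π) ∧
  (∀ i, ((δ (Circle.exp (s i)) : PSub k) : E3) ∈ arcSide k (σ i) ∧
        ((δ (Circle.exp (s' i)) : PSub k) : E3) ∈ arcSide k (σ i)) ∧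
  (∀ i, ∃ q : Path (δ (Circle.exp (s' i))) (δ (Circle.exp (s i))),
      (∀ u, ((q u : PSub k) : E3) ∈ arcSide k (σ i)) ∧
      NullLoop ((arcPath δ (s i) (s' i)).trans q)) ∧
  (∀ i, ∃ q₁ : Path (γ (Circle.exp (t (i + 1)))) (δ (Circle.exp (s (i + 1)))),
        ∃ q₂ : Path (δ (Circle.exp (s' i))) (γ (Circle.exp (t i))),
      (∀ u, ((q₁ u : PSub k) : E3) ∈ arcSide k (σ (i + 1))) ∧
      (∀ u, ((q₂ u : PSub k) : E3) ∈ arcSide k (σ i)) ∧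
      NullLoop ((arcPath γ (t i) (t (i + 1))).trans
        (q₁.trans (((arcPath δ (s' i) (s (i + 1))).symm).trans q₂))))

def Admissible (k m : ℕ) (t : ℕ → ℝ) (σ : ℕ → Fin k) (γ δ : C(Circle, PSub k)) : Prop :=
  ∃ s s' : ℕ → ℝ, AdmissibleWith k m t σ γ δ s s'


/-- A pillowcase code: a (periodically extended) sequence of even length `2n ≥ 2` with
entries in `Fin k` such that cyclically adjacent entries differ. -/
structure PillowCode (k : ℕ) where
  n : ℕ
  σ : ℕ → Fin k
  n_pos : 1 ≤ n
  periodic : ∀ i, σ (i + 2 * n) = σ i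
  adjacent : ∀ i, σ i ≠ σ (i + 1)

/-- Equivalence of pillowcase codes: same length and equal up to a cyclic shift. -/
def CodeRel (k : ℕ) (c c' : PillowCode k) : Prop :=
  c.n = c'.n ∧ ∃ j, ∀ i, c'.σ i = c.σ (i + j)

/-- Free homotopy of (non-nullhomotopic) closed curves. -/
def LoopRel (k : ℕ) (γ δ : {f : C(Circle, PSub k) // ¬ IsNullCurve f}) : Prop :=
  γ.1.Homotopic δ.1

/-!
With `n` the half-length of the code, take the curve of height `sin (n s) / 2`, `s ∈ ℝ / 2πℤ`:
it meets the equator exactly at the times `i π / n` and lies alternately in the upper and lower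
hemisphere in between. Its longitude interpolates piecewise linearly between the midpoints of the
arcs `e_{σ_0}, e_{σ_1}, …` taken at those times, so the `i`-th crossing is the midpoint of
`e_{σ_i}`, which is never a puncture.
-/

open Filter Set

def interpolate (θ : ℤ → ℝ) (x : ℝ) : ℝ := θ ⌊x⌋ + (θ (⌊x⌋ + 1) - θ ⌊x⌋) * Int.fract x

section interpolate

variable (θ : ℤ → ℝ)

@[simp]
lemma interpolate_intCast (m : ℤ) : interpolate θ m = θ m := by
  simp [interpolate]

lemma interpolate_eq_of_mem_Icc {m : ℤ} {x : ℝ} (hx : x ∈ Icc (m : ℝ) (m + 1)) :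
    interpolate θ x = θ m + (θ (m + 1) - θ m) * (x - m) := by
  rcases eq_or_lt_of_le hx.2 with rfl | hlt
  · rw [show (m : ℝ) + 1 = ((m + 1 : ℤ) : ℝ) by push_cast; ring, interpolate_intCast]
    simp
  · have hfloor : ⌊x⌋ = m := Int.floor_eq_iff.2 ⟨hx.1, hlt⟩
    rw [interpolate, Int.fract, hfloor]

lemma continuous_interpolate : Continuous (interpolate θ) := by
  have hfin : LocallyFinite fun m : ℤ => Icc (m : ℝ) (m + 1) :=
    locallyFinite_Icc_of_tendsto tendsto_intCast_atTop_atTop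
      (tendsto_atBot_add_const_right _ _ (tendsto_intCast_atBot_iff.2 tendsto_id))
  refine hfin.continuous (iUnion_Icc_intCast ℝ) (fun _ => isClosed_Icc) fun m => ?_
  exact (Continuous.continuousOn (by fun_prop)).congr fun x hx => interpolate_eq_of_mem_Icc θ hx

lemma interpolate_add_intCast {p : ℤ} (hθ : Function.Periodic θ p) (x : ℝ) :
    interpolate θ (x + p) = interpolate θ x := by
  simp only [interpolate, Int.floor_add_intCast, Int.fract_add_intCast,
    add_right_comm _ p 1, hθ _]

end interpolate

lemma eqPt_apply (θ : ℝ) : eqPt θ 0 = cos θ ∧ eqPt θ 1 = sin θ ∧ eqPt θ 2 = 0 := by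
  simp [eqPt]

lemma exists_sub_eq_of_eqPt_eq {α β : ℝ} (h : eqPt α = eqPt β) : ∃ l : ℤ, α - β = 2 * π * l := by
  have hcos : cos α = cos β := by simpa [eqPt_apply] using congrArg (· 0) h
  have hsin : sin α = sin β := by simpa [eqPt_apply] using congrArg (· 1) h
  exact Real.Angle.angle_eq_iff_two_pi_dvd_sub.1 (Real.Angle.cos_sin_inj hcos hsin)

def midAngle (k : ℕ) (j : Fin k) : ℝ := (2 * j + 1) * π / k

lemma eqPt_midAngle_mem_arcSide {k : ℕ} (j : Fin k) : eqPt (midAngle k j) ∈ arcSide k j := by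
  have hk : (0 : ℝ) < k := by exact_mod_cast j.pos
  refine ⟨midAngle k j, ?_, ?_, rfl⟩ <;>
  · rw [midAngle, div_lt_div_iff_of_pos_right hk]
    nlinarith [pi_pos]

/-- The midpoint of an arc is not a puncture: `(2j + 1) π / k - 2 π j' / k` is an odd multiple
of `π / k`, hence never a multiple of `2π`. -/
lemma eqPt_midAngle_ne_puncture {k : ℕ} (j j' : Fin k) : eqPt (midAngle k j) ≠ puncture k j' := by
  intro h
  obtain ⟨l, hl⟩ := exists_sub_eq_of_eqPt_eq h
  have hk : (k : ℝ) ≠ 0 := by exact_mod_cast j.pos.ne'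
  have hodd : ((2 * (j - j' - l * k) + 1 : ℤ) : ℝ) = 0 := by
    rw [midAngle] at hl
    field_simp at hl
    push_cast
    nlinarith [pi_pos]
  have : 2 * ((j : ℤ) - j' - l * k) + 1 = 0 := by exact_mod_cast hodd
  omega

lemma neg_one_pow_mul_sin_pos {x : ℝ} {i : ℕ} (h₁ : i * π < x) (h₂ : x < (i + 1) * π) :
    0 < (-1) ^ i * sin x := by
  have hsin : sin x = (-1) ^ i * sin (x - i * π) := by
    rw [← sin_add_nat_mul_pi, sub_add_cancel]
  rw [hsin, ← mul_assoc, ← pow_add, ← two_mul, pow_mul, neg_one_sq, one_pow, one_mul]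
  exact sin_pos_of_pos_of_lt_pi (by linarith) (by linarith)

lemma exists_int_eq_mul_pi_div_iff_exists_circle_exp_eq {n : ℕ} (hn : n ≠ 0) (s : ℝ) :
    (∃ m : ℤ, s = m * π / n) ↔ ∃ i : ℕ, Circle.exp s = Circle.exp (i * π / n) := by
  have hn' : (n : ℝ) ≠ 0 := Nat.cast_ne_zero.2 hn
  simp_rw [Circle.exp_eq_exp]
  constructor
  · rintro ⟨m, rfl⟩
    obtain ⟨q, r, hr0, rfl⟩ : ∃ q r : ℤ, 0 ≤ r ∧ m = r + q * (2 * n) :=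
      ⟨m / (2 * n), m % (2 * n), Int.emod_nonneg _ (by omega),
        by linarith [Int.mul_ediv_add_emod m (2 * n)]⟩
    have hr : ((r.toNat : ℕ) : ℝ) = r := by exact_mod_cast Int.toNat_of_nonneg hr0
    refine ⟨r.toNat, q, ?_⟩
    rw [hr]
    push_cast
    field_simp
  · rintro ⟨i, q, rfl⟩
    refine ⟨i + 2 * n * q, ?_⟩
    push_cast
    field_simp

/-- Lies on the sphere only for `h ^ 2 ≤ 1`: otherwise `√` truncates to `0`. -/
def spherePoint (φ h : ℝ) : E3 := !₂[cos φ * √(1 - h ^ 2), sin φ * √(1 - h ^ 2), h]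

@[simp]
lemma spherePoint_two (φ h : ℝ) : spherePoint φ h 2 = h := by
  simp [spherePoint]

lemma spherePoint_zero (φ : ℝ) : spherePoint φ 0 = eqPt φ := by
  ext i; fin_cases i <;> simp [spherePoint, eqPt]

lemma spherePoint_mem_sphere2 (φ : ℝ) {h : ℝ} (hh : h ^ 2 ≤ 1) : spherePoint φ h ∈ sphere2 := by
  rw [sphere2, mem_sphere_zero_iff_norm, EuclideanSpace.norm_eq, sqrt_eq_one]
  simp only [spherePoint, Fin.sum_univ_three, Real.norm_eq_abs, sq_abs]
  simp only [Matrix.cons_val_zero, Matrix.cons_val_one, Matrix.cons_val_two,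
    Matrix.head_cons, Matrix.tail_cons, mul_pow, sq_sqrt (sub_nonneg.2 hh)]
  nlinarith [sin_sq_add_cos_sq φ]

lemma Continuous.spherePoint {X : Type*} [TopologicalSpace X] {φ h : X → ℝ} (hφ : Continuous φ)
    (hh : Continuous h) : Continuous fun x => spherePoint (φ x) (h x) := by
  unfold _root_.spherePoint
  fun_prop

lemma Circle.isQuotientMap_exp : Topology.IsQuotientMap Circle.exp :=
  Circle.isCoveringMap_exp.isQuotientMap Circle.exp_surjective

namespace PillowCode

variable {k : ℕ} (c : PillowCode k)

lemma n_ne_zero : c.n ≠ 0 := Nat.one_le_iff_ne_zero.1 c.n_pos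

def intCode (m : ℤ) : Fin k := c.σ (m : ZMod (2 * c.n)).val

lemma intCode_natCast (i : ℕ) : c.intCode i = c.σ i := by
  rw [intCode, Int.cast_natCast, ZMod.val_natCast]
  exact Function.Periodic.map_mod_nat c.periodic i

lemma intCode_periodic : Function.Periodic c.intCode (2 * c.n : ℕ) := by
  intro m
  simp only [intCode, Int.cast_add, Int.cast_natCast, ZMod.natCast_self, add_zero]

def longitude (s : ℝ) : ℝ := interpolate (fun m => midAngle k (c.intCode m)) (c.n * s / π)

def height (s : ℝ) : ℝ := sin (c.n * s) / 2

def curve (s : ℝ) : E3 := spherePoint (c.longitude s) (c.height s)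

lemma height_sq_le_one (s : ℝ) : c.height s ^ 2 ≤ 1 := by
  rw [height, div_pow]
  nlinarith [sin_sq_le_one (c.n * s)]

lemma height_eq_zero_iff (s : ℝ) : c.height s = 0 ↔ ∃ m : ℤ, s = m * π / c.n := by
  have hn : (c.n : ℝ) ≠ 0 := Nat.cast_ne_zero.2 c.n_ne_zero
  rw [height, div_eq_zero_iff, or_iff_left two_ne_zero, sin_eq_zero_iff]
  refine exists_congr fun m => ?_
  rw [eq_div_iff hn, eq_comm, mul_comm]

lemma neg_one_pow_mul_height_pos {i : ℕ} {s : ℝ} (h₁ : i * π / c.n < s)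
    (h₂ : s < (i + 1 : ℕ) * π / c.n) : 0 < (-1) ^ i * c.height s := by
  have hn : (0 : ℝ) < c.n := Nat.cast_pos.2 c.n_pos
  rw [div_lt_iff₀ hn, mul_comm s] at h₁
  rw [lt_div_iff₀ hn, mul_comm s] at h₂
  push_cast at h₂
  rw [height, mul_div_assoc']
  exact div_pos (neg_one_pow_mul_sin_pos h₁ h₂) two_pos

lemma curve_two (s : ℝ) : c.curve s 2 = c.height s :=
  spherePoint_two _ _

lemma curve_mem_sphere2 (s : ℝ) : c.curve s ∈ sphere2 :=
  spherePoint_mem_sphere2 _ (c.height_sq_le_one s)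

lemma curve_int_mul_pi_div (m : ℤ) :
    c.curve (m * π / c.n) = eqPt (midAngle k (c.intCode m)) := by
  have hn : (c.n : ℝ) ≠ 0 := Nat.cast_ne_zero.2 c.n_ne_zero
  have hheight : c.height (m * π / c.n) = 0 := (c.height_eq_zero_iff _).2 ⟨m, rfl⟩
  have hlong : c.longitude (m * π / c.n) = midAngle k (c.intCode m) := by
    rw [longitude, mul_div_cancel₀ _ hn, mul_div_cancel_right₀ _ pi_ne_zero, interpolate_intCast]
  rw [curve, hheight, hlong, spherePoint_zero]

/-- Off the equator the curve avoids the punctures by height; on it, it sits at an arc midpoint. -/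
lemma curve_notMem_range_puncture (s : ℝ) : c.curve s ∉ range (puncture k) := by
  rintro ⟨j, hj⟩
  have hheight : c.height s = 0 := by
    rw [← c.curve_two, ← hj, puncture, (eqPt_apply _).2.2]
  obtain ⟨m, rfl⟩ := (c.height_eq_zero_iff s).1 hheight
  rw [curve_int_mul_pi_div] at hj
  exact eqPt_midAngle_ne_puncture _ j hj.symm

lemma continuous_curve : Continuous c.curve := by
  have hlong : Continuous c.longitude :=
    (continuous_interpolate _).comp (by fun_prop)
  have hheight : Continuous c.height := by unfold height; fun_prop
  exact hlong.spherePoint hheight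

lemma curve_periodic : Function.Periodic c.curve (2 * π) := by
  intro s
  have hlong : c.longitude (s + 2 * π) = c.longitude s := by
    have hx : c.n * (s + 2 * π) / π = c.n * s / π + (2 * c.n : ℕ) := by
      push_cast; field_simp
    rw [longitude, longitude, hx]
    exact interpolate_add_intCast _ (fun m => by rw [c.intCode_periodic]) _
  have hheight : c.height (s + 2 * π) = c.height s := by
    rw [height, height, mul_add, sin_periodic.nat_mul c.n]
  rw [curve, curve, hlong, hheight]

def curveMap : C(ℝ, PSub k) :=
  ⟨fun s => ⟨c.curve s, c.curve_mem_sphere2 s, c.curve_notMem_range_puncture s⟩,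
    c.continuous_curve.subtype_mk _⟩

lemma curveMap_factorsThrough : Function.FactorsThrough c.curveMap Circle.exp := by
  intro a b hab
  obtain ⟨m, rfl⟩ := Circle.exp_eq_exp.1 hab
  exact Subtype.ext (c.curve_periodic.int_mul m b)

def loop : C(Circle, PSub k) :=
  Circle.isQuotientMap_exp.lift c.curveMap c.curveMap_factorsThrough

lemma loop_exp (s : ℝ) : (c.loop (Circle.exp s) : E3) = c.curve s :=
  congrArg Subtype.val
    (DFunLike.congr_fun (Circle.isQuotientMap_exp.lift_comp c.curveMap c.curveMap_factorsThrough) s)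

lemma loop_exp_mem_equatorSet_iff (s : ℝ) : (c.loop (Circle.exp s) : E3) ∈ equatorSet k ↔
    ∃ i : ℕ, Circle.exp s = Circle.exp (i * π / c.n) := by
  rw [← exists_int_eq_mul_pi_div_iff_exists_circle_exp_eq c.n_ne_zero, ← height_eq_zero_iff,
    ← curve_two, ← loop_exp]
  exact and_iff_right (c.loop _).2

lemma loop_exp_crossing (i : ℕ) :
    (c.loop (Circle.exp (i * π / c.n)) : E3) = eqPt (midAngle k (c.σ i)) := by
  rw [loop_exp, ← c.intCode_natCast, ← c.curve_int_mul_pi_div, Int.cast_natCast]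

lemma loop_exp_mem_hemi {i : ℕ} {s : ℝ} (h₁ : i * π / c.n < s) (h₂ : s < (i + 1 : ℕ) * π / c.n) :
    (c.loop (Circle.exp s) : E3) ∈ hemi (if Even i then true else false) := by
  have hpos := c.neg_one_pow_mul_height_pos h₁ h₂
  rcases Nat.even_or_odd i with hi | hi
  · rw [hi.neg_one_pow, one_mul] at hpos
    simpa [hi, hemi, loop_exp, curve_two] using hpos
  · rw [hi.neg_one_pow, neg_one_mul, neg_pos] at hpos
    simpa [Nat.not_even_iff_odd.2 hi, hemi, loop_exp, curve_two] using hpos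

end PillowCode

theorem stmt7_general (k : ℕ) (c : PillowCode k) :
    ∃ (γ : C(Circle, PSub k)) (t : ℕ → ℝ) (σ : ℕ → Fin k),
      IsNice k γ c.n t σ ∧ ∃ j, ∀ i, σ i = c.σ (i + j) := by
  have hn : (0 : ℝ) < c.n := Nat.cast_pos.2 c.n_pos
  refine ⟨c.loop, fun i => i * π / c.n, c.σ, ⟨c.n_pos, ?_, ?_, c.periodic, ?_, ?_, c.adjacent, ?_⟩,
    0, fun i => rfl⟩
  · exact fun i j hij => by gcongr
  · intro i
    push_cast
    field_simp
  · intro z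
    obtain ⟨s, rfl⟩ := Circle.exp_surjective z
    exact c.loop_exp_mem_equatorSet_iff s
  · intro i
    rw [c.loop_exp_crossing]
    exact eqPt_midAngle_mem_arcSide _
  · exact ⟨true, fun i s => c.loop_exp_mem_hemi⟩

/-- Every pillowcase code is realized, up to cyclic shift, as the pillowcase code of some
nice closed curve in the punctured sphere. -/
theorem stmt7 (k : ℕ) (hk : 3 ≤ k) (c : PillowCode k) :
    ∃ (γ : C(Circle, PSub k)) (t : ℕ → ℝ) (σ : ℕ → Fin k),
      IsNice k γ c.n t σ ∧ ∃ j, ∀ i, σ i = c.σ (i + j) :=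
  stmt7_general k c
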